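/- Let H be a d-uniform hypergraph whose hyperedges are all in one 2-connected component and suppose H has e hyperedges. Then the number of vertices of H (vertices covered by some hyperedge) is at most d + (e−1)(d−2). -/
import Mathlib


/-- Two hyperedges of `K` are 2-adjacent if they share at least two vertices. -/
def twoAdj {V : Type*} [DecidableEq V] (K : Finset (Finset V)) (a b : Finset V) : Prop :=
  a ∈ K ∧ b ∈ K ∧ 2 ≤ (a ∩ b).card

/-- A hypergraph is 2-connected if any two of its hyperedges are joined by a chain of
2-adjacent hyperedges. -/
def TwoConnected {V : Type*} [DecidableEq V] (K : Finset (Finset V)) : Prop :=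
  ∀ a ∈ K, ∀ b ∈ K, Relation.ReflTransGen (twoAdj K) a b

/-- If `S` is a nonempty proper subfamily of a 2-connected `H`, some hyperedge outside `S`
meets the union of `S` in at least two vertices. -/
lemma crossing_edge {V : Type*} [DecidableEq V] (H S : Finset (Finset V))
    (hS : S ⊆ H) (hne : S.Nonempty) (c : Finset V) (hcH : c ∈ H) (hcS : c ∉ S)
    (hconn : TwoConnected H) :
    ∃ b ∈ H, b ∉ S ∧ 2 ≤ (b ∩ S.sup id).card := by
  obtain ⟨a, haS⟩ := hne
  have key : ∀ c, Relation.ReflTransGen (twoAdj H) a c → c ∉ S →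
      ∃ x ∈ S, ∃ y, y ∉ S ∧ twoAdj H x y := by
    intro c h
    induction h with
    | refl => intro hc; exact absurd haS hc
    | @tail m c' hpath step ih =>
      intro hc
      by_cases hm : m ∈ S
      · exact ⟨m, hm, c', hc, step⟩
      · exact ih hm
  obtain ⟨x, hxS, y, hyS, hxH, hyH, hxy⟩ := key c (hconn a (hS haS) c hcH) hcS
  refine ⟨y, hyH, hyS, ?_⟩
  calc 2 ≤ (x ∩ y).card := hxy
    _ ≤ (y ∩ S.sup id).card := by
        apply Finset.card_le_card
        intro v hv
        rw [Finset.mem_inter] at hv ⊢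
        exact ⟨hv.2, Finset.le_sup (f := id) hxS hv.1⟩

/-- A nonempty 2-connected `d`-uniform hypergraph with `e` hyperedges covers at most
`d + (e-1)(d-2)` vertices. -/
theorem vertex_bound_of_twoConnected {V : Type*} [DecidableEq V] (d : ℕ) (hd : 2 ≤ d)
    (H : Finset (Finset V)) (hne : H.Nonempty) (hU : ∀ h ∈ H, h.card = d)
    (hconn : TwoConnected H) :
    (H.sup id).card ≤ d + (H.card - 1) * (d - 2) := by
  obtain ⟨a, ha⟩ := hne
  suffices h : ∀ j (S : Finset (Finset V)), S ⊆ H → S.Nonempty →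
      H.card - S.card = j →
      (S.sup id).card ≤ d + (S.card - 1) * (d - 2) →
      (H.sup id).card ≤ d + (H.card - 1) * (d - 2) by
    refine h (H.card - 1) {a} (by simpa using ha) ⟨a, Finset.mem_singleton_self a⟩
      (by simp) ?_
    simp [hU a ha]
  intro j
  induction j with
  | zero =>
    intro S hSH hSne hcard hbound
    have hle : S.card ≤ H.card := Finset.card_le_card hSH
    have : S = H := Finset.eq_of_subset_of_card_le hSH (by omega)
    subst this
    exact hbound
  | succ j ih =>
    intro S hSH hSne hcard hbound
    have hle : S.card ≤ H.card := Finset.card_le_card hSH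
    have hex : ∃ c ∈ H, c ∉ S := by
      by_contra hco
      push_neg at hco
      have : H ⊆ S := hco
      have := Finset.card_le_card this
      omega
    obtain ⟨c, hcH, hcS⟩ := hex
    obtain ⟨b, hbH, hbS, hb2⟩ := crossing_edge H S hSH hSne c hcH hcS hconn
    have hins : (insert b S).card = S.card + 1 := Finset.card_insert_of_notMem hbS
    refine ih (insert b S) (Finset.insert_subset hbH hSH) (Finset.insert_nonempty _ _)
      (by omega) ?_
    rw [Finset.sup_insert, hins]
    have hunion : (id b ⊔ S.sup id).card + (b ∩ S.sup id).card
        = b.card + (S.sup id).card := Finset.card_union_add_card_inter b (S.sup id)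
    have hbd : b.card = d := hU b hbH
    obtain ⟨k, hk⟩ := Nat.exists_eq_add_of_le (Finset.card_pos.mpr hSne)
    have hk' : S.card = k + 1 := by omega
    rw [hk'] at hbound ⊢
    have e1 : (k + 1 - 1) * (d - 2) = k * (d - 2) := by simp
    have e2 : (k + 1 + 1 - 1) * (d - 2) = k * (d - 2) + (d - 2) := by
      simp [Nat.succ_mul]
    rw [e1] at hbound
    rw [e2]
    omega
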